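/- arXiv:2411.07697 — 2 statements merged into one kernel-verified Lean document; each statement's English description precedes it below -/
import Mathlib

section
/- Let F = [[0,0,1],[1,1,0]]. A simple m-rowed (0,1)-matrix A avoids F as a configuration (or avoids F^T as a configuration) if and only if A is a subset of the columns of a block lower-staircase matrix: a matrix whose columns are grouped into blocks, each block B_i being either a single all-ones-above/all-zeros-below column or an identity I_k or complemented identity I_k^c (k ≥ 2) placed on the diagonal, with all entries below a block's rows equal to 0 and all entries above equal to 1 (where for avoiding F only, the blocks B_i may additionally contain repeated rows). -/
/-- A (0,1)-matrix (entries as `Bool`) is simple if it has no repeated columns. -/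
def Simple {α β : Type*} (A : α → β → Bool) : Prop :=
  Function.Injective fun j i => A i j

/-- `F` is a configuration in `A`: some submatrix of `A` is a row and column
permutation of `F`. -/
def IsConfig {α β γ δ : Type*} (F : α → β → Bool) (A : γ → δ → Bool) : Prop :=
  ∃ (r : α ↪ γ) (c : β ↪ δ), ∀ i j, F i j = A (r i) (c j)

/-- `F = [[0,0,1],[1,1,0]]`. -/
def Fcfg : Fin 2 → Fin 3 → Bool :=
  ![![false, false, true], ![true, true, false]]

/-- `Fᵀ`, the transpose of `F`. -/
def FT : Fin 3 → Fin 2 → Bool :=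
  ![![false, true], ![false, true], ![true, false]]

/-! Avoiding `F` says that for any two rows, either the support of the first lies in the
support of the second, or the second has at most one column outside the first. Hence a row is
dominated by every row of larger support, and two rows of equal support differ by one swap.
Grouping the rows into blocks by support size, every column is all ones above some block and
all zeros below it. Within a block, a column splitting it isolates one row type either by its
ones (an identity block) or by its zeros (a complemented identity block), and the swap
structure forbids both kinds of splitting column in the same block. Conversely, in a block
staircase matrix the two rows of a copy of `F` must lie in one block, and then the two columns
on which they read `0, 1` coincide. For simple matrices, avoiding `Fᵀ` already forces avoiding
`F`. -/

open Finset

section SwapFamily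

variable {β : Type*} [DecidableEq β]

def IsSwapFamily (S : Set (Finset β)) : Prop :=
  ∀ P ∈ S, ∀ Q ∈ S, #P = #Q ∧ #(P \ Q) ≤ 1

lemma subset_insert_of_card_sdiff_le_one {P V : Finset β} {x : β} (h : #(P \ V) ≤ 1)
    (hxP : x ∈ P) (hxV : x ∉ V) : P ⊆ insert x V := by
  intro y hyP
  by_cases hyV : y ∈ V
  · exact mem_insert_of_mem hyV
  · rw [card_le_one.mp h y (mem_sdiff.mpr ⟨hyP, hyV⟩) x (mem_sdiff.mpr ⟨hxP, hxV⟩)]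
    exact mem_insert_self x V

namespace IsSwapFamily

variable {S : Set (Finset β)}

lemma eq_insert_inter (hS : IsSwapFamily S) {P V W : Finset β} (hP : P ∈ S) (hV : V ∈ S)
    (hW : W ∈ S) (hVW : V ≠ W) {x : β} (hxP : x ∈ P) (hxV : x ∉ V) (hxW : x ∉ W) :
    P = insert x (V ∩ W) := by
  have hsub : P ⊆ insert x (V ∩ W) := by
    rw [insert_inter_distrib]
    exact subset_inter (subset_insert_of_card_sdiff_le_one (hS P hP V hV).2 hxP hxV)
      (subset_insert_of_card_sdiff_le_one (hS P hP W hW).2 hxP hxW)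
  have hinter : #(V ∩ W) < #V := by
    refine card_lt_card (ssubset_of_subset_of_ne inter_subset_left fun h => hVW ?_)
    exact eq_of_subset_of_card_le (inter_eq_left.mp h) (hS W hW V hV).1.le
  refine eq_of_subset_of_card_le hsub ?_
  calc #(insert x (V ∩ W)) ≤ #(V ∩ W) + 1 := card_insert_le x _
    _ ≤ #V := hinter
    _ = #P := (hS P hP V hV).1.symm

lemma eq_of_mem_of_notMem (hS : IsSwapFamily S) {P U V W : Finset β} (hP : P ∈ S)
    (hU : U ∈ S) (hV : V ∈ S) (hW : W ∈ S) (hVW : V ≠ W) {x : β} (hxP : x ∈ P) (hxU : x ∈ U)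
    (hxV : x ∉ V) (hxW : x ∉ W) : P = U :=
  (hS.eq_insert_inter hP hV hW hVW hxP hxV hxW).trans
    (hS.eq_insert_inter hU hV hW hVW hxU hxV hxW).symm

lemma eq_insert_erase (hS : IsSwapFamily S) {P U : Finset β} (hP : P ∈ S) (hU : U ∈ S)
    {x y : β} (hxU : x ∈ U) (hxP : x ∉ P) (hyP : y ∈ P) (hyU : y ∉ U) :
    P = insert y (U.erase x) := by
  have hxy : y ≠ x := fun h => hxP (h ▸ hyP)
  have hsub : P ⊆ insert y (U.erase x) := by
    rw [← erase_insert_of_ne hxy]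
    exact subset_erase.mpr ⟨subset_insert_of_card_sdiff_le_one (hS P hP U hU).2 hyP hyU, hxP⟩
  refine eq_of_subset_of_card_le hsub ?_
  calc #(insert y (U.erase x)) ≤ #(U.erase x) + 1 := card_insert_le y _
    _ = #U := by rw [card_erase_of_mem hxU]; have := card_pos.mpr ⟨x, hxU⟩; omega
    _ = #P := (hS U hU P hP).1

lemma eq_of_ne (hS : IsSwapFamily S) {U V W P Q D : Finset β} (hU : U ∈ S) (hV : V ∈ S)
    (hW : W ∈ S) (hP : P ∈ S) (hQ : Q ∈ S) (hD : D ∈ S) {x y : β} (hxU : x ∈ U) (hxV : x ∉ V)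
    (hxW : x ∉ W) (hyP : y ∈ P) (hyQ : y ∈ Q) (hyD : y ∉ D) (hPQ : P ≠ Q) : V = W := by
  by_contra hVW
  have hU_of_mem : ∀ {Z}, Z ∈ S → x ∈ Z → Z = U := fun hZ hxZ =>
    hS.eq_of_mem_of_notMem hZ hU hV hW hVW hxZ hxU hxV hxW
  have hyU : y ∉ U := by
    intro hyU
    by_cases hxD : x ∈ D
    · exact hyD (hU_of_mem hD hxD ▸ hyU)
    · have hxy : x = y := card_le_one.mp (hS U hU D hD).2 x (mem_sdiff.mpr ⟨hxU, hxD⟩) y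
        (mem_sdiff.mpr ⟨hyU, hyD⟩)
      subst hxy
      exact hPQ ((hU_of_mem hP hyP).trans (hU_of_mem hQ hyQ).symm)
  have hxP : x ∉ P := fun hxP => hyU (hU_of_mem hP hxP ▸ hyP)
  have hxQ : x ∉ Q := fun hxQ => hyU (hU_of_mem hQ hxQ ▸ hyQ)
  exact hPQ ((hS.eq_insert_erase hP hU hxU hxP hyP hyU).trans
    (hS.eq_insert_erase hQ hU hxU hxQ hyQ hyU).symm)

end IsSwapFamily

end SwapFamily

section Configurations

variable {α β : Type*} {A : α → β → Bool}

lemma isConfig_Fcfg_iff : IsConfig Fcfg A ↔ ∃ (i j : α) (c₀ c₁ c₂ : β), c₀ ≠ c₁ ∧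
    A i c₀ = false ∧ A i c₁ = false ∧ A i c₂ = true ∧
    A j c₀ = true ∧ A j c₁ = true ∧ A j c₂ = false := by
  constructor
  · rintro ⟨r, c, h⟩
    exact ⟨r 0, r 1, c 0, c 1, c 2, c.injective.ne (by decide), (h 0 0).symm, (h 0 1).symm,
      (h 0 2).symm, (h 1 0).symm, (h 1 1).symm, (h 1 2).symm⟩
  · rintro ⟨i, j, c₀, c₁, c₂, hc, h₀, h₁, h₂, h₃, h₄, h₅⟩
    refine ⟨⟨![i, j], ?_⟩, ⟨![c₀, c₁, c₂], ?_⟩, fun a b => ?_⟩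
    · intro a b hab
      fin_cases a <;> fin_cases b <;> simp_all
    · intro a b hab
      fin_cases a <;> fin_cases b <;> simp_all
    · show Fcfg a b = A (![i, j] a) (![c₀, c₁, c₂] b)
      fin_cases a <;> fin_cases b <;> simp [Fcfg, *]

lemma isConfig_FT_iff : IsConfig FT A ↔ ∃ (x y z : α) (u v : β), x ≠ y ∧
    A x u = false ∧ A x v = true ∧ A y u = false ∧ A y v = true ∧
    A z u = true ∧ A z v = false := by
  constructor
  · rintro ⟨r, c, h⟩
    exact ⟨r 0, r 1, r 2, c 0, c 1, r.injective.ne (by decide), (h 0 0).symm, (h 0 1).symm,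
      (h 1 0).symm, (h 1 1).symm, (h 2 0).symm, (h 2 1).symm⟩
  · rintro ⟨x, y, z, u, v, hxy, h₀, h₁, h₂, h₃, h₄, h₅⟩
    refine ⟨⟨![x, y, z], ?_⟩, ⟨![u, v], ?_⟩, fun a b => ?_⟩
    · intro a b hab
      fin_cases a <;> fin_cases b <;> simp_all
    · intro a b hab
      fin_cases a <;> fin_cases b <;> simp_all
    · show FT a b = A (![x, y, z] a) (![u, v] b)
      fin_cases a <;> fin_cases b <;> simp [FT, *]

end Configurations

lemma not_isConfig_Fcfg_of_not_isConfig_FT {α β : Type*} {A : α → β → Bool} (hS : Simple A)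
    (hFT : ¬ IsConfig FT A) : ¬ IsConfig Fcfg A := by
  rw [isConfig_Fcfg_iff]
  rintro ⟨r₀, r₁, c₀, c₁, c₂, hc, h₀₀, h₀₁, h₀₂, h₁₀, h₁₁, h₁₂⟩
  refine hc (hS (funext fun i => ?_))
  by_contra hne
  rw [isConfig_FT_iff] at hFT
  -- a row reading `0 1` or `1 0` on `c₀, c₁` completes a copy of `Fᵀ` with `r₀` and `r₁`
  cases h₀ : A i c₀ <;> cases h₁ : A i c₁ <;> simp only [h₀, h₁, not_true_eq_false] at hne <;>
    cases h₂ : A i c₂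
  · exact hFT ⟨r₁, i, r₀, c₂, c₁, by rintro rfl; simp_all, h₁₂, h₁₁, h₂, h₁, h₀₂, h₀₁⟩
  · exact hFT ⟨r₀, i, r₁, c₀, c₂, by rintro rfl; simp_all, h₀₀, h₀₂, h₀, h₂, h₁₀, h₁₂⟩
  · exact hFT ⟨r₁, i, r₀, c₂, c₀, by rintro rfl; simp_all, h₁₂, h₁₀, h₂, h₀, h₀₂, h₀₀⟩
  · exact hFT ⟨r₀, i, r₁, c₁, c₂, by rintro rfl; simp_all, h₀₁, h₀₂, h₁, h₂, h₁₁, h₁₂⟩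

section RowSupport

variable {α β : Type*} [Fintype β] {A : α → β → Bool} {i j : α}

def rowSupport (A : α → β → Bool) (i : α) : Finset β :=
  univ.filter fun c => A i c = true

@[simp]
lemma mem_rowSupport {c : β} : c ∈ rowSupport A i ↔ A i c = true := by
  simp [rowSupport]

lemma rowSupport_inj : rowSupport A i = rowSupport A j ↔ A i = A j := by
  simp only [Finset.ext_iff, funext_iff, mem_rowSupport, Bool.coe_iff_coe]

lemma rowSupport_subset_or_card_sdiff_le_one [DecidableEq β] (hF : ¬ IsConfig Fcfg A) (i j : α) :
    rowSupport A i ⊆ rowSupport A j ∨ #(rowSupport A j \ rowSupport A i) ≤ 1 := by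
  by_contra! h
  obtain ⟨hsub, hcard⟩ := h
  obtain ⟨c₀, hc₀, c₁, hc₁, hc⟩ := one_lt_card.mp hcard
  obtain ⟨c₂, hc₂i, hc₂j⟩ := not_subset.mp hsub
  simp only [mem_sdiff, mem_rowSupport, Bool.not_eq_true] at hc₀ hc₁ hc₂i hc₂j
  exact hF (isConfig_Fcfg_iff.mpr
    ⟨i, j, c₀, c₁, c₂, hc, hc₀.2, hc₁.2, hc₂i, hc₀.1, hc₁.1, hc₂j⟩)

lemma rowSupport_subset_of_card_lt (hF : ¬ IsConfig Fcfg A)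
    (h : #(rowSupport A i) < #(rowSupport A j)) : rowSupport A i ⊆ rowSupport A j := by
  classical
  refine (rowSupport_subset_or_card_sdiff_le_one hF i j).elim id fun hle => ?_
  have := card_sdiff_lt_card_sdiff_iff.mpr h
  exact sdiff_eq_empty_iff_subset.mp (card_eq_zero.mp (by omega))

lemma card_sdiff_rowSupport_le_one [DecidableEq β] (hF : ¬ IsConfig Fcfg A)
    (h : #(rowSupport A i) = #(rowSupport A j)) : #(rowSupport A i \ rowSupport A j) ≤ 1 := by
  refine (rowSupport_subset_or_card_sdiff_le_one hF j i).elim (fun hsub => ?_) id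
  rw [card_sdiff_comm h, sdiff_eq_empty_iff_subset.mpr hsub, card_empty]
  exact zero_le_one

def level (A : α → β → Bool) (i : α) : Fin (Fintype.card β + 1) :=
  ⟨Fintype.card β - #(rowSupport A i), by omega⟩

lemma level_lt_level_iff : level A i < level A j ↔ #(rowSupport A j) < #(rowSupport A i) := by
  have := card_le_univ (rowSupport A i)
  have := card_le_univ (rowSupport A j)
  rw [Fin.lt_def]
  simp only [level]
  omega

lemma level_eq_level_iff : level A i = level A j ↔ #(rowSupport A i) = #(rowSupport A j) := by
  have := card_le_univ (rowSupport A i)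
  have := card_le_univ (rowSupport A j)
  rw [Fin.ext_iff]
  simp only [level]
  omega

lemma apply_eq_true_of_level_lt (hF : ¬ IsConfig Fcfg A) {c : β} (hc : A i c = true)
    (h : level A j < level A i) : A j c = true :=
  mem_rowSupport.mp <|
    rowSupport_subset_of_card_lt hF (level_lt_level_iff.mp h) (mem_rowSupport.mpr hc)

lemma isSwapFamily_rowSupport [DecidableEq β] (hF : ¬ IsConfig Fcfg A)
    (L : Fin (Fintype.card β + 1)) :
    IsSwapFamily (rowSupport A '' {i | level A i = L}) := by
  rintro _ ⟨i, hi, rfl⟩ _ ⟨j, hj, rfl⟩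
  have h := level_eq_level_iff.mp (hi.trans hj.symm)
  exact ⟨h, card_sdiff_rowSupport_le_one hF h⟩

end RowSupport

section BlockStaircase

variable {α : Type*} {K : ℕ}

def IsStaircaseCol (ℓ : α → Fin K) (f : α → Bool) : Prop :=
  ∃ t : ℕ, t ≤ K ∧ ∀ i, f i = decide ((ℓ i : ℕ) < t)

def blockEntry (ℓ : α → Fin K) (s : α → ℕ) (typ : Fin K → Bool) (t : Fin K) (j : ℕ)
    (i : α) : Bool :=
  if (ℓ i : ℕ) < (t : ℕ) then true
  else if ℓ i = t then (if typ t then decide (s i = j) else decide (s i ≠ j))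
  else false

def IsBlockCol (ℓ : α → Fin K) (s : α → ℕ) (typ : Fin K → Bool) (f : α → Bool) : Prop :=
  ∃ (t : Fin K) (j : ℕ), (∃ i₀, ℓ i₀ = t ∧ s i₀ = j) ∧
    (∃ i₁ i₂, ℓ i₁ = t ∧ ℓ i₂ = t ∧ s i₁ ≠ s i₂) ∧ ∀ i, f i = blockEntry ℓ s typ t j i

def IsBlockStaircase {β : Type*} (ℓ : α → Fin K) (s : α → ℕ) (typ : Fin K → Bool)
    (A : α → β → Bool) : Prop :=
  ∀ c, IsStaircaseCol ℓ (fun i => A i c) ∨ IsBlockCol ℓ s typ (fun i => A i c)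

variable {ℓ : α → Fin K} {s : α → ℕ} {typ : Fin K → Bool} {f g : α → Bool} {i i' : α}

lemma IsStaircaseCol.apply_eq_true_of_le (h : IsStaircaseCol ℓ f) (hle : ℓ i' ≤ ℓ i)
    (hf : f i = true) : f i' = true := by
  obtain ⟨t, -, ht⟩ := h
  rw [ht, decide_eq_true_eq] at hf ⊢
  exact lt_of_le_of_lt (Fin.le_def.mp hle) hf

lemma isStaircaseCol_of_forall_le [Fintype α]
    (h : ∀ i i', ℓ i' ≤ ℓ i → f i = true → f i' = true) : IsStaircaseCol ℓ f := by
  classical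
  refine ⟨(univ.filter fun i => f i = true).sup fun i => (ℓ i : ℕ) + 1,
    Finset.sup_le fun i _ => (ℓ i).isLt, fun i => ?_⟩
  cases hi : f i
  · refine (decide_eq_false fun hlt => ?_).symm
    obtain ⟨i', hi', hlt'⟩ := Finset.lt_sup_iff.mp hlt
    simp [h i' i (Fin.le_def.mpr (by omega)) (mem_filter.mp hi').2] at hi
  · exact (decide_eq_true
      (Nat.lt_of_succ_le (le_sup (f := fun i => (ℓ i : ℕ) + 1) (by simpa using hi)))).symm

lemma IsBlockCol.apply_eq_true_of_lt (h : IsBlockCol ℓ s typ f) (hlt : ℓ i' < ℓ i)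
    (hf : f i = true) : f i' = true := by
  obtain ⟨t, j, -, -, ht⟩ := h
  rw [ht] at hf ⊢
  rw [Fin.lt_def] at hlt
  unfold blockEntry at hf ⊢
  split_ifs at hf ⊢ <;> simp_all [Fin.ext_iff] <;> omega

lemma blockEntry_determined {t : Fin K} {j : ℕ} {a b : α} (hab : ℓ a = ℓ b)
    (ha : blockEntry ℓ s typ t j a = false) (hb : blockEntry ℓ s typ t j b = true) :
    t = ℓ a ∧ j = if typ t then s b else s a := by
  unfold blockEntry at ha hb
  split_ifs at ha hb <;> simp_all [Fin.ext_iff]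

lemma IsBlockCol.eq (hf : IsBlockCol ℓ s typ f) (hg : IsBlockCol ℓ s typ g) {a b : α}
    (hab : ℓ a = ℓ b) (hfa : f a = false) (hfb : f b = true) (hga : g a = false)
    (hgb : g b = true) : f = g := by
  obtain ⟨t, j, -, -, hf⟩ := hf
  obtain ⟨t', j', -, -, hg⟩ := hg
  obtain ⟨rfl, rfl⟩ := blockEntry_determined hab (hf a ▸ hfa) (hf b ▸ hfb)
  obtain ⟨ht', rfl⟩ := blockEntry_determined hab (hg a ▸ hga) (hg b ▸ hgb)
  subst ht'
  exact funext fun i => (hf i).trans (hg i).symm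

lemma isBlockCol_of_forall {t : Fin K} {j : ℕ} (hj : ∃ i₀, ℓ i₀ = t ∧ s i₀ = j)
    (hsplit : ∃ i₁ i₂, ℓ i₁ = t ∧ ℓ i₂ = t ∧ s i₁ ≠ s i₂)
    (habove : ∀ i, ℓ i < t → f i = true)
    (hat : ∀ i, ℓ i = t → f i = if typ t then decide (s i = j) else decide (s i ≠ j))
    (hbelow : ∀ i, t < ℓ i → f i = false) : IsBlockCol ℓ s typ f := by
  refine ⟨t, j, hj, hsplit, fun i => ?_⟩
  unfold blockEntry
  rcases lt_trichotomy (ℓ i) t with h | rfl | h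
  · rw [if_pos (Fin.lt_def.mp h)]
    exact habove i h
  · simpa using hat i rfl
  · rw [if_neg (not_lt.mpr (Fin.le_def.mp h.le)), if_neg h.ne']
    exact hbelow i h

lemma not_isConfig_Fcfg_of_isBlockStaircase {β : Type*} {A : α → β → Bool} (hS : Simple A)
    (h : IsBlockStaircase ℓ s typ A) : ¬ IsConfig Fcfg A := by
  have hdown : ∀ c {i i'}, ℓ i' < ℓ i → A i c = true → A i' c = true := fun c _ _ hlt =>
    (h c).elim (·.apply_eq_true_of_le hlt.le) (·.apply_eq_true_of_lt hlt)
  rw [isConfig_Fcfg_iff]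
  rintro ⟨r₀, r₁, c₀, c₁, c₂, hc, h₀₀, h₀₁, h₀₂, h₁₀, h₁₁, h₁₂⟩
  rcases lt_trichotomy (ℓ r₀) (ℓ r₁) with hlt | heq | hgt
  · simp [hdown c₀ hlt h₁₀] at h₀₀
  · -- staircase columns are constant on each block
    have hblock : ∀ c, A r₀ c = false → A r₁ c = true → IsBlockCol ℓ s typ (fun i => A i c) :=
      fun c h₀ h₁ => (h c).resolve_left fun hst => by
        simp [hst.apply_eq_true_of_le heq.le h₁] at h₀
    exact hc (hS ((hblock c₀ h₀₀ h₁₀).eq (hblock c₁ h₀₁ h₁₁) heq h₀₀ h₁₀ h₀₁ h₁₁))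
  · simp [hdown c₂ hgt h₀₂] at h₁₂

end BlockStaircase

section Construction

variable {α β : Type*} [Fintype β] [DecidableEq β] {A : α → β → Bool} {i j : α}

noncomputable def rowCode (A : α → β → Bool) (i : α) : ℕ :=
  Fintype.equivFin (β → Bool) (A i)

lemma rowCode_eq_rowCode_iff : rowCode A i = rowCode A j ↔ A i = A j := by
  simp [rowCode, Fin.val_inj]

open Classical in
noncomputable def blockType (A : α → β → Bool) (L : Fin (Fintype.card β + 1)) : Bool :=
  decide (∀ c a b d, level A a = L → level A b = L → level A d = L →
    A a c = true → A b c = true → A d c = false → A a = A b)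

lemma exists_rowCode_of_split (hF : ¬ IsConfig Fcfg A) {c : β} {p q : α}
    (hpq : level A p = level A q) (hp : A p c = true) (hq : A q c = false) :
    ∃ j, (∃ i₀, level A i₀ = level A p ∧ rowCode A i₀ = j) ∧
      ∀ i, level A i = level A p → A i c =
        if blockType A (level A p) then decide (rowCode A i = j)
        else decide (rowCode A i ≠ j) := by
  classical
  have hne : ∀ {i}, A i c = true → rowCode A i ≠ rowCode A q := fun hi h => by
    simp [rowCode_eq_rowCode_iff.mp h, hq] at hi
  cases htyp : blockType A (level A p)
  · rw [blockType, decide_eq_false_iff_not] at htyp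
    push Not at htyp
    obtain ⟨c₀, a, b, d, ha, hb, hd, hac, hbc, hdc, hab⟩ := htyp
    refine ⟨rowCode A q, ⟨q, hpq.symm, rfl⟩, fun i hi => ?_⟩
    cases hic : A i c
    · -- `c₀` has two distinct rows of ones in this block, so `c` cannot have two distinct
      -- rows of zeros there
      have hiq := (isSwapFamily_rowSupport hF (level A p)).eq_of_ne ⟨p, rfl, rfl⟩
        ⟨i, hi, rfl⟩ ⟨q, hpq.symm, rfl⟩ ⟨a, ha, rfl⟩ ⟨b, hb, rfl⟩ ⟨d, hd, rfl⟩
        (mem_rowSupport.mpr hp) (by simpa using hic) (by simpa using hq)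
        (mem_rowSupport.mpr hac) (mem_rowSupport.mpr hbc) (by simpa using hdc)
        (fun h => hab (rowSupport_inj.mp h))
      simp [rowCode_eq_rowCode_iff, rowSupport_inj.mp hiq]
    · simpa using hne hic
  · refine ⟨rowCode A p, ⟨p, rfl, rfl⟩, fun i hi => ?_⟩
    rw [blockType, decide_eq_true_eq] at htyp
    cases hic : A i c
    · simp only [if_true, Bool.false_eq, decide_eq_false_iff_not, rowCode_eq_rowCode_iff]
      intro h
      simp [h, hp] at hic
    · simpa [rowCode_eq_rowCode_iff] using htyp c i p q hi rfl hpq.symm hic hp hq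

lemma isBlockCol_of_split (hF : ¬ IsConfig Fcfg A) {c : β} {p q : α}
    (hpq : level A p = level A q) (hp : A p c = true) (hq : A q c = false) :
    IsBlockCol (level A) (rowCode A) (blockType A) (fun i => A i c) := by
  obtain ⟨j, hj, hat⟩ := exists_rowCode_of_split hF hpq hp hq
  refine isBlockCol_of_forall hj ⟨p, q, rfl, hpq.symm, fun h => ?_⟩
    (fun i hi => apply_eq_true_of_level_lt hF hp hi) hat (fun i hi => ?_)
  · simp [rowCode_eq_rowCode_iff.mp h, hq] at hp
  · by_contra hic
    simp [apply_eq_true_of_level_lt hF (by simpa using hic) (hpq ▸ hi)] at hq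

theorem isBlockStaircase_of_not_isConfig_Fcfg [Fintype α] (hF : ¬ IsConfig Fcfg A) :
    IsBlockStaircase (level A) (rowCode A) (blockType A) A := by
  intro c
  by_cases hsplit : ∃ p q, level A p = level A q ∧ A p c = true ∧ A q c = false
  · obtain ⟨p, q, hpq, hp, hq⟩ := hsplit
    exact Or.inr (isBlockCol_of_split hF hpq hp hq)
  · refine Or.inl (isStaircaseCol_of_forall_le fun i i' hle hi => ?_)
    rcases hle.lt_or_eq with hlt | heq
    · exact apply_eq_true_of_level_lt hF hi hlt
    · by_contra hi'
      exact hsplit ⟨i, i', heq.symm, hi, by simpa using hi'⟩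

end Construction

/-- A simple matrix `A` avoids `F` or avoids `Fᵀ` iff (up to row permutation, encoded by
the row data `ℓ`, `s`) `A` is a subset of the columns of a block staircase matrix:
rows are distributed into blocks (`ℓ` gives the block of a row, `s` its position in its
block, `typ` whether the block is an identity `I_k` or a complemented identity `I_k^c`,
possibly with repeated rows), and each column of `A` is either a staircase column
(all ones on the blocks above some cut, all zeros below) or a column of some diagonal
block `B_t` (extended by ones above the block and zeros below); every block carrying a
block column is an `I_k` or `I_k^c` with `k ≥ 2` (at least two distinct rows). -/
theorem stmt2 (m n : ℕ) (A : Fin m → Fin n → Bool) (hS : Simple A) :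
    (¬ IsConfig Fcfg A ∨ ¬ IsConfig FT A) ↔
    ∃ (K : ℕ) (ℓ : Fin m → Fin K) (s : Fin m → ℕ) (typ : Fin K → Bool),
      ∀ c : Fin n,
        (∃ t : ℕ, t ≤ K ∧ ∀ i, A i c = decide ((ℓ i : ℕ) < t)) ∨
        (∃ (t : Fin K) (j : ℕ),
          (∃ i₀, ℓ i₀ = t ∧ s i₀ = j) ∧
          (∃ i₁ i₂, ℓ i₁ = t ∧ ℓ i₂ = t ∧ s i₁ ≠ s i₂) ∧
          ∀ i, A i c =
            if (ℓ i : ℕ) < (t : ℕ) then true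
            else if ℓ i = t then
              (if typ t then decide (s i = j) else decide (s i ≠ j))
            else false) := by
  constructor
  · intro h
    have hF := h.elim id (not_isConfig_Fcfg_of_not_isConfig_FT hS)
    exact ⟨_, _, _, _, isBlockStaircase_of_not_isConfig_Fcfg hF⟩
  · rintro ⟨K, ℓ, s, typ, h⟩
    exact Or.inl (not_isConfig_Fcfg_of_isBlockStaircase hS h)
end

section
/- A triangle-free simple graph on m vertices with at least ⌊m²/4⌋ − (⌊m/2⌋ − 2) edges is bipartite. -/
/-!
A triangle-free, non-bipartite graph `G` on `n` vertices has `n ≥ 5` and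
`e(G) + ⌊n/2⌋ ≤ ⌊n²/4⌋ + 1`, by induction on `n`. Let `v` have minimum degree `d`. Adjacent
vertices have disjoint neighbourhoods, so `n ≤ 2d` would make `G` bipartite; hence `2d < n`.
If `G - v` is not bipartite, the induction hypothesis applies, and the `d ≤ ⌊(n-1)/2⌋` edges at `v`
fit into the increment `⌊n²/4⌋ - ⌊(n-1)²/4⌋ = ⌊n/2⌋`. Otherwise `G - v` has a bipartition
`(A, B)`, and `v` has `a ≥ 1` neighbours in `A` and `b ≥ 1` in `B`, since `G` is not bipartite.
These are pairwise non-adjacent across the parts, so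
`e(G) ≤ |A||B| - ab + a + b ≤ ⌊(n-1)²/4⌋ + 1`; also `d ≥ 2`, whence `n ≥ 5`. The bound `n ≥ 5`
excludes the small `n` for which the truncated subtraction weakens the edge hypothesis.
-/

open Finset

theorem Nat.succ_sq_div_four (n : ℕ) : (n + 1) ^ 2 / 4 = n ^ 2 / 4 + (n + 1) / 2 := by
  rcases Nat.even_or_odd' n with ⟨k, rfl | rfl⟩
  · have h₁ : (2 * k + 1) ^ 2 = 4 * (k ^ 2 + k) + 1 := by ring
    have h₀ : (2 * k) ^ 2 = 4 * k ^ 2 := by ring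
    omega
  · have h₁ : (2 * k + 1 + 1) ^ 2 = 4 * (k ^ 2 + 2 * k + 1) := by ring
    have h₀ : (2 * k + 1) ^ 2 = 4 * (k ^ 2 + k) + 1 := by ring
    omega

namespace SimpleGraph

variable {V : Type*} {G : SimpleGraph V}

theorem IsBipartiteWith.card_edgeFinset_add_mul_le [Fintype V] [DecidableRel G.Adj]
    {s t s' t' : Finset V} (h : G.IsBipartiteWith s t) (hs' : s' ⊆ s) (ht' : t' ⊆ t)
    (hst' : ∀ x ∈ s', ∀ y ∈ t', ¬G.Adj x y) :
    #G.edgeFinset + #s' * #t' ≤ #s * #t := by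
  classical
  have hdeg : ∀ x ∈ s', G.degree x + #t' ≤ #t := by
    intro x hx
    rw [← card_neighborFinset_eq_degree, ← card_union_of_disjoint]
    · exact card_le_card (union_subset (isBipartiteWith_neighborFinset_subset h (hs' hx)) ht')
    · rw [Finset.disjoint_left]
      intro y hy hy'
      exact hst' x hx y hy' ((mem_neighborFinset ..).1 hy)
  calc #G.edgeFinset + #s' * #t'
      = ∑ x ∈ s \ s', G.degree x + ∑ x ∈ s', (G.degree x + #t') := by
        rw [← isBipartiteWith_sum_degrees_eq_card_edges h, ← sum_sdiff hs', sum_add_distrib,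
          sum_const, smul_eq_mul, add_assoc]
    _ ≤ ∑ _x ∈ s \ s', #t + ∑ _x ∈ s', #t :=
        add_le_add (sum_le_sum fun x hx => isBipartiteWith_degree_le h (sdiff_subset hx))
          (sum_le_sum hdeg)
    _ = #s * #t := by rw [sum_sdiff hs', sum_const, smul_eq_mul]

theorem Coloring.isBipartiteWith_filter [Fintype V] (C : G.Coloring (Fin 2)) :
    G.IsBipartiteWith ↑(univ.filter fun w => C w = 0) ↑(univ.filter fun w => C w ≠ 0) where
  disjoint := by
    rw [Finset.disjoint_coe, Finset.disjoint_filter]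
    exact fun _ _ h₀ h₁ => h₁ h₀
  mem_of_adj x y hxy := by
    have := C.valid hxy
    simp only [coe_filter, mem_univ, true_and, Set.mem_ofPred_eq]
    omega

theorem colorable_of_coloring_induce_compl_singleton {n : ℕ} {v : V}
    (C : (G.induce {v}ᶜ).Coloring (Fin n)) (a : Fin n)
    (ha : ∀ w : ↥({v}ᶜ : Set V), G.Adj v w → C w ≠ a) : G.Colorable n := by
  classical
  refine ⟨Coloring.mk (fun w => if h : w = v then a else C ⟨w, h⟩) fun {x y} hxy => ?_⟩
  by_cases hx : x = v <;> by_cases hy : y = v <;> simp only [hx, hy, dite_true, dite_false]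
  · exact (G.ne_of_adj hxy (hx.trans hy.symm)).elim
  · exact (ha ⟨y, hy⟩ (hx ▸ hxy)).symm
  · exact ha ⟨x, hx⟩ (hy ▸ hxy.symm)
  · exact C.valid (by simpa using hxy)

section Finite

variable [Fintype V] [DecidableRel G.Adj]

theorem card_filter_adj_compl_singleton [DecidableEq V] (v : V) :
    #(univ.filter fun w : ↥({v}ᶜ : Set V) => G.Adj v w) = G.degree v := by
  have hN : (univ.filter fun w : ↥({v}ᶜ : Set V) => G.Adj v w) =
      (G.neighborFinset v).subtype (· ∈ ({v}ᶜ : Set V)) := by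
    ext w
    simp
  rw [hN, card_subtype, filter_true_of_mem fun w hw =>
    Set.mem_compl_singleton_iff.2 ((G.mem_neighborFinset v w).1 hw).ne',
    card_neighborFinset_eq_degree]

theorem card_edgeFinset_eq_induce_compl_singleton_add_degree [DecidableEq V] (v : V) :
    #G.edgeFinset = #(G.induce {v}ᶜ).edgeFinset + G.degree v := by
  rw [card_edgeFinset_induce_compl_singleton, card_edgeFinset_deleteIncidenceSet]
  have := G.degree_le_card_edgeFinset v
  omega

theorem CliqueFree.disjoint_neighborFinset (htf : G.CliqueFree 3) {u v : V} (huv : G.Adj u v) :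
    Disjoint (G.neighborFinset u) (G.neighborFinset v) := by
  classical
  rw [Finset.disjoint_left]
  intro w hu hv
  rw [mem_neighborFinset] at hu hv
  exact htf {u, v, w} (is3Clique_triple_iff.2 ⟨huv, hu, hv⟩)

theorem CliqueFree.colorable_two_of_card_le_degree_add_degree (htf : G.CliqueFree 3) {u v : V}
    (huv : G.Adj u v) (hcard : Fintype.card V ≤ G.degree u + G.degree v) : G.Colorable 2 := by
  classical
  have hcover : G.neighborFinset u ∪ G.neighborFinset v = univ := by
    refine eq_univ_of_card _ (le_antisymm (card_le_univ _) ?_)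
    rwa [card_union_of_disjoint (htf.disjoint_neighborFinset huv), card_neighborFinset_eq_degree,
      card_neighborFinset_eq_degree]
  refine ⟨Coloring.mk (fun w => if G.Adj v w then 0 else 1) fun {x y} hxy => ?_⟩
  by_cases hx : G.Adj v x <;> by_cases hy : G.Adj v y <;> simp only [hx, hy, if_true, if_false]
  · exact (htf {v, x, y} (is3Clique_triple_iff.2 ⟨hx, hy, hxy⟩)).elim
  · decide
  · decide
  · have hux : G.Adj u x := by simpa [hx] using hcover.ge (mem_univ x)
    have huy : G.Adj u y := by simpa [hy] using hcover.ge (mem_univ y)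
    exact (htf {u, x, y} (is3Clique_triple_iff.2 ⟨hux, huy, hxy⟩)).elim

theorem CliqueFree.card_edgeFinset_le_of_coloring_induce_compl_singleton [DecidableEq V]
    (htf : G.CliqueFree 3) {v : V} (C : (G.induce {v}ᶜ).Coloring (Fin 2))
    (h₀ : ∃ w : ↥({v}ᶜ : Set V), G.Adj v w ∧ C w = 0)
    (h₁ : ∃ w : ↥({v}ᶜ : Set V), G.Adj v w ∧ C w ≠ 0) :
    #G.edgeFinset ≤ (Fintype.card V - 1) ^ 2 / 4 + 1 := by
  set N := univ.filter fun w : ↥({v}ᶜ : Set V) => G.Adj v w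
  set a := N.filter fun w => C w = 0
  set b := N.filter fun w => C w ≠ 0
  have hrect := C.isBipartiteWith_filter.card_edgeFinset_add_mul_le (s' := a) (t' := b)
    (fun w hw => mem_filter.2 ⟨mem_univ w, (mem_filter.1 hw).2⟩)
    (fun w hw => mem_filter.2 ⟨mem_univ w, (mem_filter.1 hw).2⟩)
    (fun x hx y hy hxy => htf {v, ↑x, ↑y}
      (is3Clique_triple_iff.2 ⟨(mem_filter.1 (mem_filter.1 hx).1).2,
        (mem_filter.1 (mem_filter.1 hy).1).2, by simpa using hxy⟩))
  set s := univ.filter fun w => C w = 0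
  set t := univ.filter fun w => C w ≠ 0
  have hst : #s + #t = Fintype.card V - 1 := by
    rw [card_filter_add_card_filter_not, card_univ, Fintype.card_compl_set, Set.card_singleton]
  have hab : #a + #b = G.degree v := by
    rw [card_filter_add_card_filter_not, card_filter_adj_compl_singleton]
  have ha : 0 < #a := by
    obtain ⟨w, hvw, hw⟩ := h₀
    exact card_pos.2 ⟨w, by simp [a, N, hvw, hw]⟩
  have hb : 0 < #b := by
    obtain ⟨w, hvw, hw⟩ := h₁
    exact card_pos.2 ⟨w, by simp [b, N, hvw, hw]⟩
  have hamgm : #s * #t ≤ (#s + #t) ^ 2 / 4 :=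
    (Nat.le_div_iff_mul_le (by norm_num)).2 (by linarith [four_mul_le_sq_add #s #t])
  have hprod : #a + #b ≤ #a * #b + 1 := by nlinarith
  have hedges := G.card_edgeFinset_eq_induce_compl_singleton_add_degree v
  rw [hst] at hamgm
  omega

theorem CliqueFree.five_le_card_and_card_edgeFinset_le_of_not_colorable (htf : G.CliqueFree 3)
    (hG : ¬G.Colorable 2) :
    5 ≤ Fintype.card V ∧ #G.edgeFinset + Fintype.card V / 2 ≤ Fintype.card V ^ 2 / 4 + 1 := by
  classical
  induction hn : Fintype.card V using Nat.strong_induction_on generalizing V with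
  | _ n ih =>
  have : Nonempty V := by
    by_contra! h
    exact hG (.of_isEmpty 2)
  have hn₀ : 0 < n := hn ▸ Fintype.card_pos
  obtain ⟨v, hv⟩ := G.exists_minimal_degree_vertex
  have hdeg : 2 * G.degree v < n := by
    by_contra! h
    obtain ⟨u, hu⟩ := (G.degree_pos_iff_exists_adj v).1 (by omega)
    exact hG (htf.colorable_two_of_card_le_degree_add_degree hu
      (by have := hv ▸ G.minDegree_le_degree u; omega))
  have hedges := G.card_edgeFinset_eq_induce_compl_singleton_add_degree v
  have hsq := Nat.succ_sq_div_four (n - 1)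
  rw [Nat.sub_add_cancel hn₀] at hsq
  by_cases hcol : (G.induce {v}ᶜ).Colorable 2
  · obtain ⟨C⟩ := hcol
    have h₀ : ∃ w : ↥({v}ᶜ : Set V), G.Adj v w ∧ C w = 0 := by
      by_contra! h
      exact hG (colorable_of_coloring_induce_compl_singleton C 0 h)
    have h₁ : ∃ w : ↥({v}ᶜ : Set V), G.Adj v w ∧ C w ≠ 0 := by
      by_contra! h
      exact hG (colorable_of_coloring_induce_compl_singleton C 1 fun w hw => by simp [h w hw])
    have hdeg₂ : 2 ≤ G.degree v := by
      obtain ⟨w₀, hw₀, hC₀⟩ := h₀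
      obtain ⟨w₁, hw₁, hC₁⟩ := h₁
      rw [← card_neighborFinset_eq_degree]
      exact one_lt_card.2 ⟨w₀, (mem_neighborFinset ..).2 hw₀, w₁, (mem_neighborFinset ..).2 hw₁,
        fun h => hC₁ (Subtype.ext h ▸ hC₀)⟩
    have := htf.card_edgeFinset_le_of_coloring_induce_compl_singleton C h₀ h₁
    rw [hn] at this
    omega
  · have hcard : Fintype.card ↥({v}ᶜ : Set V) = n - 1 := by
      rw [Fintype.card_compl_set, Set.card_singleton, hn]
    obtain ⟨h5, hbound⟩ :=
      ih (n - 1) (by omega) (htf.comap ⟨(Embedding.induce _).toCopy⟩) hcol hcard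
    omega

end Finite

end SimpleGraph

/-- A triangle-free simple graph on `m` vertices with at least
`⌊m²/4⌋ − (⌊m/2⌋ − 2)` edges is bipartite (i.e. 2-colorable). -/
theorem stmt8 (m : ℕ) (G : SimpleGraph (Fin m)) [DecidableRel G.Adj]
    (htf : G.CliqueFree 3)
    (he : m ^ 2 / 4 - (m / 2 - 2) ≤ G.edgeFinset.card) :
    G.Colorable 2 := by
  by_contra hG
  obtain ⟨hm, hbound⟩ := htf.five_le_card_and_card_edgeFinset_le_of_not_colorable hG
  rw [Fintype.card_fin] at hm hbound
  have hhalf : m / 2 ≤ m ^ 2 / 4 := by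
    have : 2 * m / 4 ≤ m ^ 2 / 4 := Nat.div_le_div_right (by nlinarith)
    omega
  omega
end
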